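/- Let n ≥ k ≥ 0 be integers with k ≤ n−1, let F be a pointwise-increasing family of k-element subsets of [n], and let x, y ∈ [n] with x < y. Then, after standardisation, F_x^- ⊇ F_y^- as families of k-subsets of [n−1]. -/

import Mathlib

/-- The board `[n] = {1, …, n}` as a finite set of natural numbers. -/
def board (n : ℕ) : Finset ℕ := Finset.Icc 1 n

/-- The order-preserving relabelling of `[n] \ {x}` onto `[n-1]`:
elements below `x` are unchanged, elements above `x` drop by one. -/
def stdElt (x r : ℕ) : ℕ := if r < x then r else r - 1

/-- Standardise a set avoiding `x`: relabel it via `stdElt x`. -/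
def stdSet (x : ℕ) (S : Finset ℕ) : Finset ℕ := S.image (stdElt x)

/-- The standardised section `F_x^+ = { S \ {x} : x ∈ S ∈ F }`,
viewed as a family of subsets of `[n-1]`. -/
def secPlus (F : Set (Finset ℕ)) (x : ℕ) : Set (Finset ℕ) :=
  {T | ∃ S ∈ F, x ∈ S ∧ T = stdSet x (S.erase x)}

/-- The standardised section `F_x^- = { S ∈ F : x ∉ S }`,
viewed as a family of subsets of `[n-1]`. -/
def secMinus (F : Set (Finset ℕ)) (x : ℕ) : Set (Finset ℕ) :=
  {T | ∃ S ∈ F, x ∉ S ∧ T = stdSet x S}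

mutual
  /-- `AliceWins n k F`: Alice wins her `F`-game, where `F` is a family of
  `k`-subsets of `[n]`.  Terminal games (`k = 0` or `k = n`) are won iff `F`
  is nonempty; otherwise Alice needs a first offer `x` such that Bob wins both
  his `F_x^+`-game and his `F_x^-`-game. -/
  def AliceWins (n k : ℕ) (F : Set (Finset ℕ)) : Prop :=
    if h : k = 0 ∨ n ≤ k then F.Nonempty
    else ∃ x ∈ board n,
      BobWins (n - 1) (k - 1) (secPlus F x) ∧ BobWins (n - 1) k (secMinus F x)
  termination_by n
  decreasing_by all_goals omega

  /-- `BobWins n k F`: Bob wins his `F`-game, where `F` is a family of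
  `k`-subsets of `[n]`.  Terminal games (`k = 0` or `k = n`) are won iff `F`
  is nonempty; otherwise Bob needs, for every first offer `x`, that Alice wins
  her `F_x^+`-game or her `F_x^-`-game. -/
  def BobWins (n k : ℕ) (F : Set (Finset ℕ)) : Prop :=
    if h : k = 0 ∨ n ≤ k then F.Nonempty
    else ∀ x ∈ board n,
      AliceWins (n - 1) (k - 1) (secPlus F x) ∨ AliceWins (n - 1) k (secMinus F x)
  termination_by n
  decreasing_by all_goals omega
end

/-- `S ⪯ T` in the pointwise order: the increasing enumerations of `S` and `T`
have the same length and are pointwise `≤`. -/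
def PointwiseLE (S T : Finset ℕ) : Prop :=
  List.Forall₂ (· ≤ ·) (S.sort (· ≤ ·)) (T.sort (· ≤ ·))

/-- `F` consists of `k`-element subsets of `[n]`. -/
def IsFamilyOn (n k : ℕ) (F : Set (Finset ℕ)) : Prop :=
  ∀ S ∈ F, S ⊆ board n ∧ S.card = k

/-- `F` is pointwise-increasing as a family of `k`-subsets of `[n]`:
it is upwards closed in the pointwise order. -/
def IsIncreasingFamily (n k : ℕ) (F : Set (Finset ℕ)) : Prop :=
  ∀ S T : Finset ℕ, S ∈ F → T ⊆ board n → T.card = k → PointwiseLE S T → T ∈ F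


/-!
Given `S ∈ F` avoiding `y`, push every element of `S` in the window `[x, y)` up by one. The
result `S'` avoids `x`, dominates `S` pointwise (the shift is strictly monotone on sets avoiding
`y`, so it commutes with sorting), hence lies in `F`, and standardising `S'` at `x` gives the same
set as standardising `S` at `y`.
-/

theorem Finset.sort_image_of_strictMonoOn {α β : Type*} [LinearOrder α] [LinearOrder β]
    [DecidableEq β] {f : α → β} {s : Finset α} (hf : StrictMonoOn f s) :
    (s.image f).sort (· ≤ ·) = (s.sort (· ≤ ·)).map f := by
  rw [Finset.sort, Finset.sort, Finset.image_val_of_injOn hf.injOn]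
  exact (Multiset.map_sort _ _ _ _ fun _ ha _ hb => (hf.le_iff_le ha hb).symm).symm

theorem pointwiseLE_image {f : ℕ → ℕ} {S : Finset ℕ} (hf : StrictMonoOn f S)
    (hle : ∀ s ∈ S, s ≤ f s) : PointwiseLE S (S.image f) := by
  rw [PointwiseLE, Finset.sort_image_of_strictMonoOn hf, List.forall₂_map_right_iff]
  exact List.forall₂_same.2 fun s hs => hle s ((Finset.mem_sort _).1 hs)

def shiftWindow (x y s : ℕ) : ℕ := if x ≤ s ∧ s < y then s + 1 else s

section shiftWindow

variable {x y : ℕ}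

theorem le_shiftWindow (s : ℕ) : s ≤ shiftWindow x y s := by
  unfold shiftWindow; split_ifs <;> omega

theorem strictMonoOn_shiftWindow {S : Finset ℕ} (hyS : y ∉ S) :
    StrictMonoOn (shiftWindow x y) S := by
  intro a ha b hb hab
  have : a ≠ y := fun h => hyS (h ▸ ha)
  have : b ≠ y := fun h => hyS (h ▸ hb)
  unfold shiftWindow; split_ifs <;> omega

theorem shiftWindow_ne_left (hxy : x < y) (s : ℕ) : shiftWindow x y s ≠ x := by
  unfold shiftWindow; split_ifs <;> omega

theorem shiftWindow_mem_board {n s : ℕ} (hy : y ≤ n) (hs : s ∈ board n) :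
    shiftWindow x y s ∈ board n := by
  simp only [board, Finset.mem_Icc] at hs ⊢
  unfold shiftWindow; split_ifs <;> omega

theorem stdElt_shiftWindow (hxy : x < y) {s : ℕ} (hs : s ≠ y) :
    stdElt x (shiftWindow x y s) = stdElt y s := by
  unfold stdElt shiftWindow; split_ifs <;> omega

end shiftWindow

/-- for an increasing family, the standardised `-`-sections
decrease with the sectioning element: `F_x^- ⊇ F_y^-` for `x < y`. -/
theorem secMinus_antimono (n k : ℕ) (hkn : k ≤ n - 1) (F : Set (Finset ℕ))
    (hF : IsFamilyOn n k F) (hinc : IsIncreasingFamily n k F)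
    (x y : ℕ) (hx : x ∈ board n) (hy : y ∈ board n) (hxy : x < y) :
    secMinus F y ⊆ secMinus F x := by
  rintro T ⟨S, hS, hyS, rfl⟩
  obtain ⟨hSn, hSk⟩ := hF S hS
  have hmono := strictMonoOn_shiftWindow (x := x) hyS
  refine ⟨S.image (shiftWindow x y), hinc S _ hS ?_ ?_ ?_, ?_, ?_⟩
  · exact Finset.image_subset_iff.2 fun s hs =>
      shiftWindow_mem_board (Finset.mem_Icc.1 hy).2 (hSn hs)
  · rw [Finset.card_image_of_injOn hmono.injOn, hSk]
  · exact pointwiseLE_image hmono fun s _ => le_shiftWindow s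
  · simp only [Finset.mem_image, not_exists, not_and]
    exact fun s _ => shiftWindow_ne_left hxy s
  · rw [stdSet, stdSet, Finset.image_image]
    exact Finset.image_congr fun s hs =>
      (stdElt_shiftWindow hxy (ne_of_mem_of_not_mem hs hyS)).symm
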